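/- Let s ∈ ℝ, let n ∈ ℝ³ be a unit vector, and let A ∈ M₃(ℝ) satisfy Σ_j n_j A_{jk} = 0 for every k (this encodes A_{jk} = ∂n_j/∂x_k for a unit vector field n). Set d = tr A, let c ∈ ℝ³ have components c_i = Σ_{j,k} ε_{ijk} A_{kj} (the curl), let G_{ijk} = s(n_i A_{jk} + A_{ik} n_j) (which equals ∂Q_{ij}/∂x_k for Q = s(n⊗n − (1/3)Id)), and define I₁ = Σ_i (Σ_j G_{ijj})(Σ_k G_{ikk}), I₂ = Σ_{i,j,k} G_{ikj}G_{ijk}, I₃ = Σ_{i,j,k} G_{ijk}G_{ijk}, I₄ = Σ_{i,j,k,l} s(n_l n_k − δ_{lk}/3) G_{ijl}G_{ijk}. Then I₁ = s²(d² + |n×c|²), I₂ = s²(|n×c|² + tr(A²)), I₃ = 2s²(tr(A²) + (n·c)² + |n×c|²), and I₄ = 2s³((2/3)|n×c|² − (1/3)tr(A²) − (1/3)(n·c)²). -/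
import Mathlib
set_option maxRecDepth 4000
set_option maxHeartbeats 1600000


/-- The Levi-Civita symbol on `Fin 3`. -/
def leviCivita (i j k : Fin 3) : ℝ :=
  if (i, j, k) ∈ [((0 : Fin 3), (1 : Fin 3), (2 : Fin 3)), (1, 2, 0), (2, 0, 1)] then 1
  else if (i, j, k) ∈ [((0 : Fin 3), (2 : Fin 3), (1 : Fin 3)), (2, 1, 0), (1, 0, 2)] then -1
  else 0

/-- the four elastic invariants `I₁,…,I₄` built from the gradient data
`A` of a unit vector field `n` (with `G_{ijk} = s(nᵢA_{jk} + A_{ik}nⱼ)`, `d = tr A`,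
`c = curl`) are expressed in terms of `d`, `n·c`, `n×c` and `tr(A²)`. -/
theorem stmt16 (s : ℝ) (n : Fin 3 → ℝ) (hn : (∑ i, (n i) ^ 2) = 1)
    (A : Matrix (Fin 3) (Fin 3) ℝ) (hA : ∀ k, (∑ j, n j * A j k) = 0)
    (d : ℝ) (hd : d = A.trace)
    (c : Fin 3 → ℝ) (hc : ∀ i, c i = ∑ j, ∑ k, leviCivita i j k * A k j)
    (G : Fin 3 → Fin 3 → Fin 3 → ℝ)
    (hGdef : ∀ i j k, G i j k = s * (n i * A j k + A i k * n j))
    (I₁ I₂ I₃ I₄ : ℝ)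
    (hI₁ : I₁ = ∑ i, (∑ j, G i j j) * (∑ k, G i k k))
    (hI₂ : I₂ = ∑ i, ∑ j, ∑ k, G i k j * G i j k)
    (hI₃ : I₃ = ∑ i, ∑ j, ∑ k, G i j k * G i j k)
    (hI₄ : I₄ = ∑ i, ∑ j, ∑ k, ∑ l,
      s * (n l * n k - (if l = k then (1 : ℝ) else 0) / 3) * G i j l * G i j k) :
    I₁ = s ^ 2 * (d ^ 2 + ∑ i, (crossProduct n c i) ^ 2) ∧
    I₂ = s ^ 2 * ((∑ i, (crossProduct n c i) ^ 2) + (A * A).trace) ∧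
    I₃ = 2 * s ^ 2 * ((A * A).trace + (∑ i, n i * c i) ^ 2 +
          ∑ i, (crossProduct n c i) ^ 2) ∧
    I₄ = 2 * s ^ 3 * ((2 / 3) * (∑ i, (crossProduct n c i) ^ 2) -
          (1 / 3) * (A * A).trace - (1 / 3) * (∑ i, n i * c i) ^ 2) := by
  have hA0 := hA 0; have hA1 := hA 1; have hA2 := hA 2
  simp only [Fin.sum_univ_three] at hA0 hA1 hA2
  have hn' : n 0 ^ 2 + n 1 ^ 2 + n 2 ^ 2 = 1 := by simpa [Fin.sum_univ_three] using hn
  subst hd hI₁ hI₂ hI₃ hI₄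
  have hc0 : c 0 = A 2 1 - A 1 2 := by
    rw [hc]; simp [leviCivita, Fin.sum_univ_three, Prod.ext_iff]; ring
  have hc1 : c 1 = A 0 2 - A 2 0 := by
    rw [hc]; simp [leviCivita, Fin.sum_univ_three, Prod.ext_iff]; ring
  have hc2 : c 2 = A 1 0 - A 0 1 := by
    rw [hc]; simp [leviCivita, Fin.sum_univ_three, Prod.ext_iff]; ring
  simp only [hGdef, Fin.sum_univ_three, crossProduct, hc0, hc1, hc2,
    Matrix.trace, Matrix.diag_apply, Matrix.mul_apply, LinearMap.mk₂_apply,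
    Pi.sub_apply, Pi.mul_apply, Matrix.cons_val_zero, Matrix.cons_val_one, Matrix.head_cons,
    Matrix.cons_val_two, Matrix.tail_cons]
  norm_num [Fin.ext_iff]
  refine ⟨?_, ?_, ?_, ?_⟩
  · linear_combination (s^2*(A 0 0 + A 1 1 + A 2 2)^2) * hn' + (s^2*(2*(A 0 0 + A 1 1 + A 2 2)*n 0 + 2*(A 0 0*n 0 + A 0 1*n 1 + A 0 2*n 2) - (n 0*A 0 0 + n 1*A 1 0 + n 2*A 2 0))) * hA0 + (s^2*(2*(A 0 0 + A 1 1 + A 2 2)*n 1 + 2*(A 1 0*n 0 + A 1 1*n 1 + A 1 2*n 2) - (n 0*A 0 1 + n 1*A 1 1 + n 2*A 2 1))) * hA1 + (s^2*(2*(A 0 0 + A 1 1 + A 2 2)*n 2 + 2*(A 2 0*n 0 + A 2 1*n 1 + A 2 2*n 2) - (n 0*A 0 2 + n 1*A 1 2 + n 2*A 2 2))) * hA2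
  · linear_combination (s^2*(A 0 0^2 + A 1 1^2 + A 2 2^2 + 2*(A 0 1*A 1 0 + A 0 2*A 2 0 + A 1 2*A 2 1))) * hn' + (s^2*(4*(A 0 0*n 0 + A 0 1*n 1 + A 0 2*n 2) - (n 0*A 0 0 + n 1*A 1 0 + n 2*A 2 0))) * hA0 + (s^2*(4*(A 1 0*n 0 + A 1 1*n 1 + A 1 2*n 2) - (n 0*A 0 1 + n 1*A 1 1 + n 2*A 2 1))) * hA1 + (s^2*(4*(A 2 0*n 0 + A 2 1*n 1 + A 2 2*n 2) - (n 0*A 0 2 + n 1*A 1 2 + n 2*A 2 2))) * hA2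
  · linear_combination (2*s^2*(A 0 0^2 + A 1 1^2 + A 2 2^2 + 2*(A 0 1*A 1 0 + A 0 2*A 2 0 + A 1 2*A 2 1))) * hn' + (2*s^2*(n 0*A 0 0 + n 1*A 1 0 + n 2*A 2 0)) * hA0 + (2*s^2*(n 0*A 0 1 + n 1*A 1 1 + n 2*A 2 1)) * hA1 + (2*s^2*(n 0*A 0 2 + n 1*A 1 2 + n 2*A 2 2)) * hA2
  · linear_combination (2*s^3*(((A 0 0*n 0 + A 0 1*n 1 + A 0 2*n 2)^2 + (A 1 0*n 0 + A 1 1*n 1 + A 1 2*n 2)^2 + (A 2 0*n 0 + A 2 1*n 1 + A 2 2*n 2)^2) - (A 0 0^2 + A 1 1^2 + A 2 2^2 + 2*(A 0 1*A 1 0 + A 0 2*A 2 0 + A 1 2*A 2 1))/3)) * hn' + (2*s^3*(n 0*(n 0*(n 0*A 0 0 + n 1*A 1 0 + n 2*A 2 0) + n 1*(n 0*A 0 1 + n 1*A 1 1 + n 2*A 2 1) + n 2*(n 0*A 0 2 + n 1*A 1 2 + n 2*A 2 2)) + 2*(A 0 0*n 0 + A 0 1*n 1 + A 0 2*n 2)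 - (4/3)*(n 0*A 0 0 + n 1*A 1 0 + n 2*A 2 0))) * hA0 + (2*s^3*(n 1*(n 0*(n 0*A 0 0 + n 1*A 1 0 + n 2*A 2 0) + n 1*(n 0*A 0 1 + n 1*A 1 1 + n 2*A 2 1) + n 2*(n 0*A 0 2 + n 1*A 1 2 + n 2*A 2 2)) + 2*(A 1 0*n 0 + A 1 1*n 1 + A 1 2*n 2) - (4/3)*(n 0*A 0 1 + n 1*A 1 1 + n 2*A 2 1))) * hA1 + (2*s^3*(n 2*(n 0*(n 0*A 0 0 + n 1*A 1 0 + n 2*A 2 0) + n 1*(n 0*A 0 1 + n 1*A 1 1 + n 2*A 2 1) + n 2*(n 0*A 0 2 + n 1*A 1 2 + n 2*A 2 2)) + 2*(A 2 0*n 0 + A 2 1*n 1 + A 2 2*n 2) - (4/3)*(n 0*A 0 2 + n 1*A 1 2 + n 2*A 2 2))) * hA2
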